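/- If the maximal operator N^k defined by N^k[f](L) = sup_{x∈ℝ^d} ∫_{x+L} f(y) dy (for f supported in the unit ball) is bounded from L^p(ℝ^d) to L^1(G(d,k)) for some p < ∞, then every (d,k) set has positive Lebesgue measure. -/

import Mathlib

open MeasureTheory Metric ENNReal NNReal

noncomputable section

/-- `ℝ^d`. -/
abbrev Euc (d : ℕ) : Type := EuclideanSpace ℝ (Fin d)

instance (d : ℕ) : MeasurableSpace (Submodule ℝ (Euc d)) := ⊤

/-- `γ` is the invariant probability measure on the Grassmannian `G(n,k)`. -/
def IsGrassMeasure (n k : ℕ) (γ : Measure (Submodule ℝ (Euc n))) : Prop :=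
  IsProbabilityMeasure γ ∧ γ {L | Module.finrank ℝ L ≠ k} = 0 ∧
    ∀ ρ : Euc n ≃ₗᵢ[ℝ] Euc n, ∀ S : Set (Submodule ℝ (Euc n)),
      γ ((fun L => Submodule.map (ρ.toLinearEquiv : Euc n →ₗ[ℝ] Euc n) L) ⁻¹' S) = γ S

/-- The `k`-plane maximal operator `N^k[f](L) = sup_x ∫_{x+L} |f|`, where the integral
is with respect to `k`-dimensional (Hausdorff) measure on the affine plane `x + L`. -/
def planeMax {n : ℕ} (k : ℕ) (L : Submodule ℝ (Euc n)) (f : Euc n → ℝ) : ℝ≥0∞ :=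
  ⨆ x : Euc n, ∫⁻ y in {z | z - x ∈ L}, (‖f y‖₊ : ℝ≥0∞) ∂ μH[(k : ℝ)]

/-! If `E` were null, then for every `y` the test function `1_{(E - y) ∩ B(0,1)}` would vanish
in `L^p`, so by the bound `N^k` of it vanishes at `γ`-almost every `L`; running `y` through a
countable dense set, one `L` of dimension `k` works for all of them. But `E` contains a plane
`x + L`, and for `y` within `1/2` of `x` the plane `(x - y) + L` carries the test function on a
`k`-dimensional disc of radius `1/2`, which has positive `k`-dimensional Hausdorff measure. -/

theorem Submodule.hausdorffMeasure_affine_inter_closedBall_pos {E : Type*} [NormedAddCommGroup E]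
    [NormedSpace ℝ E] [MeasurableSpace E] [BorelSpace E] (L : Submodule ℝ E)
    [FiniteDimensional ℝ L] (x : E) {r : ℝ} (hr : 0 < r) :
    0 < μH[(Module.finrank ℝ L : ℝ)] ({z | z - x ∈ L} ∩ closedBall x r) := by
  have himage : (fun v : L => x + v) '' closedBall 0 r = {z | z - x ∈ L} ∩ closedBall x r := by
    ext z
    constructor
    · rintro ⟨v, hv, rfl⟩
      simpa [dist_eq_norm] using hv
    · rintro ⟨hz, hzr⟩
      refine ⟨⟨z - x, hz⟩, ?_, by simp⟩
      simpa [dist_eq_norm] using hzr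
  have hiso : Isometry fun v : L => x + v :=
    (IsometryEquiv.addLeft x).isometry.comp isometry_subtype_coe
  rw [← himage, hiso.hausdorffMeasure_image (Or.inl (Nat.cast_nonneg _))]
  exact measure_closedBall_pos _ _ hr

section planeMax

variable {d k : ℕ}

theorem hausdorffMeasure_le_planeMax {L : Submodule ℝ (Euc d)} {f : Euc d → ℝ} {x : Euc d}
    {T : Set (Euc d)} (hT : MeasurableSet T) (hTL : T ⊆ {z | z - x ∈ L})
    (hf : ∀ z ∈ T, 1 ≤ ‖f z‖) : μH[(k : ℝ)] T ≤ planeMax k L f :=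
  calc μH[(k : ℝ)] T = ∫⁻ _ in T, 1 ∂μH[(k : ℝ)] := (setLIntegral_one T).symm
    _ ≤ ∫⁻ z in T, ‖f z‖₊ ∂μH[(k : ℝ)] :=
      setLIntegral_mono' hT fun z hz => by exact_mod_cast hf z hz
    _ ≤ ∫⁻ z in {z | z - x ∈ L}, ‖f z‖₊ ∂μH[(k : ℝ)] := lintegral_mono_set hTL
    _ ≤ planeMax k L f :=
      le_iSup (fun x => ∫⁻ z in {z | z - x ∈ L}, (‖f z‖₊ : ℝ≥0∞) ∂μH[(k : ℝ)]) x

theorem planeMax_indicator_pos {L : Submodule ℝ (Euc d)} {F : Set (Euc d)} {x y : Euc d}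
    (hx : (fun v => x + v) '' (L : Set (Euc d)) ⊆ F) (hxy : dist x y < 1 / 2) :
    0 < planeMax (Module.finrank ℝ L) L (((· + y) ⁻¹' F ∩ closedBall 0 1).indicator 1) := by
  set T := {z | z - (x - y) ∈ L} ∩ closedBall (x - y) (1 / 2)
  have hT : MeasurableSet T :=
    ((L.closed_of_finiteDimensional.preimage (_root_.continuous_sub_right _)).inter
      isClosed_closedBall).measurableSet
  refine (L.hausdorffMeasure_affine_inter_closedBall_pos (x - y) one_half_pos).trans_le
    (hausdorffMeasure_le_planeMax hT Set.inter_subset_left ?_)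
  rintro z ⟨hzL, hz⟩
  have hzF : z ∈ (· + y) ⁻¹' F := hx ⟨_, hzL, by dsimp only; abel⟩
  have hz1 : z ∈ closedBall 0 1 := by
    have hxy' : dist (x - y) 0 = dist x y := by rw [dist_zero_right, dist_eq_norm]
    rw [mem_closedBall] at hz ⊢
    linarith [dist_triangle z (x - y) 0]
  simp [Set.indicator_of_mem (Set.mem_inter hzF hz1)]

theorem ae_planeMax_eq_zero_of_ae_eq_zero {p : ℝ} {γ : Measure (Submodule ℝ (Euc d))}
    {C : ℝ≥0} (hbound : ∀ f : Euc d → ℝ, Measurable f → Function.support f ⊆ closedBall 0 1 →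
      ∫⁻ L, planeMax k L f ∂γ ≤ C * eLpNorm f (ENNReal.ofReal p) volume)
    {f : Euc d → ℝ} (hf : Measurable f) (hsupp : Function.support f ⊆ closedBall 0 1)
    (hf0 : f =ᵐ[volume] 0) : ∀ᵐ L ∂γ, planeMax k L f = 0 := by
  refine (lintegral_eq_zero_iff measurable_from_top).mp (nonpos_iff_eq_zero.mp ?_)
  simpa [eLpNorm_eq_zero_of_ae_zero hf0] using hbound f hf hsupp

end planeMax

theorem planeMax_bound_implies_positive_measure_general (d k : ℕ)
    (p : ℝ)
    (γ : Measure (Submodule ℝ (Euc d))) (hγ : IsGrassMeasure d k γ)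
    (C : ℝ≥0)
    (hbound : ∀ f : Euc d → ℝ, Measurable f →
      Function.support f ⊆ Metric.closedBall (0 : Euc d) 1 →
      (∫⁻ L, planeMax k L f ∂ γ) ≤ C * eLpNorm f (ENNReal.ofReal p) volume)
    (E : Set (Euc d))
    (hplanes : ∀ L : Submodule ℝ (Euc d), Module.finrank ℝ L = k →
      ∃ x : Euc d, (fun v => x + v) '' (L : Set (Euc d)) ⊆ E) :
    0 < volume E := by
  by_contra hE
  rw [not_lt, nonpos_iff_eq_zero] at hE
  obtain ⟨hprob, hrank, -⟩ := hγ
  obtain ⟨u, hu⟩ := TopologicalSpace.exists_dense_seq (Euc d)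
  set F := toMeasurable volume E
  have hnull : ∀ n, ∀ᵐ L ∂γ,
      planeMax k L (((· + u n) ⁻¹' F ∩ closedBall 0 1).indicator 1) = 0 := fun n =>
    ae_planeMax_eq_zero_of_ae_eq_zero hbound
      (measurable_const.indicator (((measurableSet_toMeasurable _ _).preimage
        (measurable_add_const _)).inter measurableSet_closedBall))
      (Set.support_indicator_subset.trans Set.inter_subset_right)
      (Set.indicator_ae_eq_zero.2 <| measure_mono_null
        (Set.inter_subset_left.trans Set.inter_subset_left)
        (by rw [measure_preimage_add_right, measure_toMeasurable, hE]))
  have hdim : ∀ᵐ (L : Submodule ℝ (Euc d)) ∂γ, Module.finrank ℝ L = k :=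
    ae_iff.2 (by simpa using hrank)
  obtain ⟨L, hLk, hL⟩ := (hdim.and (ae_all_iff.2 hnull)).exists
  obtain ⟨x, hx⟩ := hplanes L hLk
  obtain ⟨n, hn⟩ := hu.exists_dist_lt x one_half_pos
  have hpos := planeMax_indicator_pos (hx.trans (subset_toMeasurable volume E)) hn
  rw [hLk, hL n] at hpos
  exact hpos.false

/-- If `N^k` is bounded from `L^p(ℝ^d)` to `L^1(G(d,k))` for some `p < ∞` (for `f`
supported in the unit ball), then every `(d,k)` set has positive Lebesgue measure. -/
theorem planeMax_bound_implies_positive_measure (d k : ℕ) (hk : 1 ≤ k) (hkd : k < d)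
    (p : ℝ) (hp : 1 ≤ p)
    (γ : Measure (Submodule ℝ (Euc d))) (hγ : IsGrassMeasure d k γ)
    (C : ℝ≥0)
    (hbound : ∀ f : Euc d → ℝ, Measurable f →
      Function.support f ⊆ Metric.closedBall (0 : Euc d) 1 →
      (∫⁻ L, planeMax k L f ∂ γ) ≤ C * eLpNorm f (ENNReal.ofReal p) volume)
    (E : Set (Euc d)) (hE : MeasurableSet E)
    (hplanes : ∀ L : Submodule ℝ (Euc d), Module.finrank ℝ L = k →
      ∃ x : Euc d, (fun v => x + v) '' (L : Set (Euc d)) ⊆ E) :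
    0 < volume E :=
  planeMax_bound_implies_positive_measure_general d k p γ hγ C hbound E hplanes
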